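/- Let H be a symmetric n×n real matrix and X an invertible n×n real matrix with Xᵀ H X = Iₙ; partition X = [X_p, X_⊥] into its first p and last n−p columns. Let γ₁ ≥ γ₂ ≥ … ≥ γₙ ≥ 0 with γ_p > γ_{p+1}, set Γ_p = diag(γ₁,…,γ_p) and Γ'_p = diag(γ_{p+1},…,γₙ). Let X⁰ be an n×p real matrix with X_pᵀ H X⁰ invertible, E⁰ = X_⊥ᵀ H X⁰ (X_pᵀ H X⁰)⁻¹, and for k ≥ 0 set E^{(k)} = (Γ'_p)^k E⁰ Γ_p^{−k} and M^{(k)} = I_p + (E^{(k)})ᵀ E^{(k)}. Then ‖X_⊥ᵀ H (X_p + X_⊥ E^{(k)}) (M^{(k)})^{−1/2}‖ = ‖E^{(k)}‖/√(1 + ‖E^{(k)}‖²) ≤ (γ_{p+1}/γ_p)^k ‖E⁰‖. -/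

import Mathlib

open Matrix
open scoped Matrix.Norms.L2Operator

/-- The spectral norm (operator 2-norm) of a real matrix. -/
noncomputable def specNorm {m n : ℕ} (A : Matrix (Fin m) (Fin n) ℝ) : ℝ :=
  ‖LinearMap.toContinuousLinearMap (Matrix.toEuclideanLin A)‖

/-- The square root of a positive semidefinite matrix, as `Matrix.PosSemidef.sqrt` was defined
in the older Mathlib (removed since). -/
noncomputable def Matrix.PosSemidef.sqrt {n : Type*} [Fintype n] [DecidableEq n]
    {A : Matrix n n ℝ} (hA : A.PosSemidef) : Matrix n n ℝ :=
  hA.1.eigenvectorUnitary.1 * diagonal ((↑) ∘ (√·) ∘ hA.1.eigenvalues) *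
    (star hA.1.eigenvectorUnitary : Matrix n n ℝ)

lemma Matrix.PosSemidef.posSemidef_sqrt {n : Type*} [Fintype n] [DecidableEq n]
    {A : Matrix n n ℝ} (hA : A.PosSemidef) : hA.sqrt.PosSemidef := by
  have := (posSemidef_diagonal_iff.mpr (fun i => Real.sqrt_nonneg (hA.1.eigenvalues i))).mul_mul_conjTranspose_same
    (hA.1.eigenvectorUnitary : Matrix n n ℝ)
  exact this

lemma Matrix.PosSemidef.sqrt_mul_self {n : Type*} [Fintype n] [DecidableEq n]
    {A : Matrix n n ℝ} (hA : A.PosSemidef) : hA.sqrt * hA.sqrt = A := by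
  have hs := hA.1.spectral_theorem
  rw [Unitary.conjStarAlgAut_apply] at hs
  unfold Matrix.PosSemidef.sqrt
  set C := (hA.1.eigenvectorUnitary : Matrix n n ℝ)
  have hC : (star hA.1.eigenvectorUnitary : Matrix n n ℝ) * C = 1 := Unitary.coe_star_mul_self _
  calc C * diagonal ((↑) ∘ (√·) ∘ hA.1.eigenvalues) * (star hA.1.eigenvectorUnitary : Matrix n n ℝ)
        * (C * diagonal ((↑) ∘ (√·) ∘ hA.1.eigenvalues) * (star hA.1.eigenvectorUnitary : Matrix n n ℝ))
      = C * (diagonal ((↑) ∘ (√·) ∘ hA.1.eigenvalues) * ((star hA.1.eigenvectorUnitary : Matrix n n ℝ) * C)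
        * diagonal ((↑) ∘ (√·) ∘ hA.1.eigenvalues)) * (star hA.1.eigenvectorUnitary : Matrix n n ℝ) := by
          simp only [Matrix.mul_assoc]
    _ = A := by
      rw [hC, Matrix.mul_one, diagonal_mul_diagonal]
      conv_rhs => rw [hs]
      congr 3
      funext i
      simp [Real.mul_self_sqrt (hA.eigenvalues_nonneg i)]

lemma specNorm_eq {m n : ℕ} (A : Matrix (Fin m) (Fin n) ℝ) : specNorm A = ‖A‖ := rfl

lemma l2_opNorm_diagonal_le {n : ℕ} (v : Fin n → ℝ) {c : ℝ} (hc : 0 ≤ c)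
    (h : ∀ i, |v i| ≤ c) : ‖Matrix.diagonal v‖ ≤ c := by
  rw [Matrix.l2_opNorm_def]
  refine ContinuousLinearMap.opNorm_le_bound _ hc fun x => ?_
  simp only [LinearEquiv.trans_apply, LinearMap.coe_toContinuousLinearMap']
  rw [EuclideanSpace.norm_eq, EuclideanSpace.norm_eq]
  rw [← Real.sqrt_sq hc, ← Real.sqrt_mul (by positivity)]
  refine Real.sqrt_le_sqrt ?_
  rw [Finset.mul_sum]
  refine Finset.sum_le_sum fun i _ => ?_
  have : toEuclideanLin (Matrix.diagonal v) x i = v i * x i := by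
    rw [Matrix.toEuclideanLin_apply]
    simp [Matrix.mulVec_diagonal]
  rw [this, Real.norm_eq_abs, Real.norm_eq_abs, abs_mul, mul_pow]
  have h2 : |v i| ^ 2 ≤ c ^ 2 := by
    apply sq_le_sq' <;> nlinarith [abs_nonneg (v i), h i]
  exact mul_le_mul_of_nonneg_right h2 (by positivity)

lemma le_l2_opNorm_diagonal {n : ℕ} (v : Fin n → ℝ) (i : Fin n) :
    |v i| ≤ ‖Matrix.diagonal v‖ := by
  have hx := Matrix.l2_opNorm_mulVec (Matrix.diagonal v) (EuclideanSpace.single i 1)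
  have h1 : Matrix.diagonal v *ᵥ (EuclideanSpace.single i (1:ℝ))
      = EuclideanSpace.single i (v i) := by
    funext j
    simp [Matrix.mulVec_diagonal, EuclideanSpace.single_apply, mul_comm]
    rcases eq_or_ne j i with rfl | hji <;> simp [*]
  rw [h1] at hx
  have h2 : ‖(EuclideanSpace.equiv (Fin n) ℝ).symm ((EuclideanSpace.single i (v i)) : (Fin n) → ℝ)‖ = |v i| := by
    have : (EuclideanSpace.equiv (Fin n) ℝ).symm ((EuclideanSpace.single i (v i)) : (Fin n) → ℝ)
        = EuclideanSpace.single i (v i) := rfl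
    rw [this, EuclideanSpace.norm_single, Real.norm_eq_abs]
  rw [h2, EuclideanSpace.norm_single] at hx
  simpa using hx

lemma l2_opNorm_one' {n : ℕ} (hn : 0 < n) : ‖(1 : Matrix (Fin n) (Fin n) ℝ)‖ = 1 := by
  haveI : Nontrivial (EuclideanSpace ℝ (Fin n)) := by
    have : Nonempty (Fin n) := ⟨⟨0, hn⟩⟩
    infer_instance
  rw [Matrix.cstar_norm_def, _root_.map_one]
  exact norm_one

lemma l2_opNorm_unitary {n : ℕ} (hn : 0 < n) (U : Matrix (Fin n) (Fin n) ℝ)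
    (hU : U ∈ Matrix.unitaryGroup (Fin n) ℝ) : ‖U‖ = 1 := by
  have h1 : Uᴴ * U = 1 := Matrix.mem_unitaryGroup_iff'.mp hU
  have h2 : ‖U‖ * ‖U‖ = 1 := by
    rw [← Matrix.l2_opNorm_conjTranspose_mul_self, h1, l2_opNorm_one' hn]
  nlinarith [norm_nonneg U]

lemma l2_opNorm_unitary_conj {n : ℕ} (hn : 0 < n) (U A : Matrix (Fin n) (Fin n) ℝ)
    (hU : U ∈ Matrix.unitaryGroup (Fin n) ℝ) : ‖U * A * star U‖ = ‖A‖ := by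
  have hUs : star U ∈ Matrix.unitaryGroup (Fin n) ℝ := Unitary.star_mem hU
  have hU1 : ‖U‖ = 1 := l2_opNorm_unitary hn U hU
  have hUs1 : ‖star U‖ = 1 := l2_opNorm_unitary hn _ hUs
  refine le_antisymm ?_ ?_
  · calc ‖U * A * star U‖ ≤ ‖U * A‖ * ‖star U‖ := Matrix.l2_opNorm_mul _ _
      _ ≤ ‖U‖ * ‖A‖ * ‖star U‖ := by
          exact mul_le_mul_of_nonneg_right (Matrix.l2_opNorm_mul _ _) (norm_nonneg _)
      _ = ‖A‖ := by rw [hU1, hUs1]; ring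
  · have : A = star U * (U * A * star U) * U := by
      have h := Matrix.mem_unitaryGroup_iff'.mp hU
      calc A = (star U * U) * A * (star U * U) := by
              simp only [Matrix.star_eq_conjTranspose] at h ⊢; rw [h]; simp
        _ = star U * (U * A * star U) * U := by noncomm_ring
    calc ‖A‖ = ‖star U * (U * A * star U) * U‖ := by rw [← this]
      _ ≤ ‖star U * (U * A * star U)‖ * ‖U‖ := Matrix.l2_opNorm_mul _ _
      _ ≤ ‖star U‖ * ‖U * A * star U‖ * ‖U‖ := by
          exact mul_le_mul_of_nonneg_right (Matrix.l2_opNorm_mul _ _) (norm_nonneg _)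
      _ = ‖U * A * star U‖ := by rw [hU1, hUs1]; ring

lemma psd_norm_resolvent {n : ℕ} (hn : 0 < n) (N : Matrix (Fin n) (Fin n) ℝ)
    (hN : N.PosSemidef) : ‖1 - (1 + N)⁻¹‖ = ‖N‖ / (1 + ‖N‖) := by
  haveI : Nonempty (Fin n) := ⟨⟨0, hn⟩⟩
  set V : Matrix (Fin n) (Fin n) ℝ := (hN.1.eigenvectorUnitary : Matrix (Fin n) (Fin n) ℝ)
    with hVdef
  have hV : V ∈ Matrix.unitaryGroup (Fin n) ℝ := SetLike.coe_mem _
  set μ : Fin n → ℝ := hN.1.eigenvalues with hμdef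
  have hμ : ∀ i, 0 ≤ μ i := hN.eigenvalues_nonneg
  have hμ1 : ∀ i, (0:ℝ) < 1 + μ i := fun i => by linarith [hμ i]
  have hspec : N = V * diagonal μ * star V := by
    have := hN.1.spectral_theorem; rw [Unitary.conjStarAlgAut_apply] at this; exact this
  have hVV : V * star V = 1 := Matrix.mem_unitaryGroup_iff.mp hV
  have hVV' : star V * V = 1 := Matrix.mem_unitaryGroup_iff'.mp hV
  have hsum : 1 + N = V * diagonal (fun i => 1 + μ i) * star V := by
    have : (diagonal (fun i => 1 + μ i) : Matrix (Fin n) (Fin n) ℝ)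
        = 1 + diagonal μ := by
      rw [← Matrix.diagonal_one, ← Matrix.diagonal_add]
    rw [this, mul_add, add_mul, mul_one, hVV, ← hspec]
  have hinv : (1 + N)⁻¹ = V * diagonal (fun i => (1 + μ i)⁻¹) * star V := by
    apply Matrix.inv_eq_right_inv
    rw [hsum]
    calc V * diagonal (fun i => 1 + μ i) * star V * (V * diagonal (fun i => (1 + μ i)⁻¹) * star V)
        = V * (diagonal (fun i => 1 + μ i) * (star V * V) * diagonal (fun i => (1 + μ i)⁻¹)) * star V := by
          noncomm_ring
      _ = 1 := by
          rw [hVV', mul_one, Matrix.diagonal_mul_diagonal]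
          have : (fun i => (1 + μ i) * (1 + μ i)⁻¹) = fun _ : Fin n => (1:ℝ) := by
            funext i; exact mul_inv_cancel₀ (hμ1 i).ne'
          rw [this, Matrix.diagonal_one, mul_one, hVV]
  have hdiff : 1 - (1 + N)⁻¹ = V * diagonal (fun i => μ i / (1 + μ i)) * star V := by
    have h1 : (1 : Matrix (Fin n) (Fin n) ℝ) = V * 1 * star V := by rw [mul_one, hVV]
    rw [hinv]
    nth_rewrite 1 [h1]
    have : (diagonal (fun i => μ i / (1 + μ i)) : Matrix (Fin n) (Fin n) ℝ)
        = 1 - diagonal (fun i => (1 + μ i)⁻¹) := by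
      ext i j
      rcases eq_or_ne i j with rfl | hij
      · simp only [Matrix.diagonal_apply_eq, Matrix.sub_apply, Matrix.one_apply_eq]
        have hne : (1 + μ i) ≠ 0 := (hμ1 i).ne'
        rw [eq_sub_iff_add_eq, inv_eq_one_div, ← add_div, add_comm (μ i) 1,
          div_self hne]
      · simp [Matrix.diagonal_apply_ne _ hij, Matrix.one_apply_ne hij]
    rw [this]
    noncomm_ring
  obtain ⟨i0, hi0⟩ := Finite.exists_max μ
  have hNd : ‖N‖ = ‖diagonal μ‖ := by
    conv_lhs => rw [hspec]
    exact l2_opNorm_unitary_conj hn V _ hV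
  have ht : ‖N‖ = μ i0 := by
    refine le_antisymm ?_ ?_
    · rw [hNd]
      exact l2_opNorm_diagonal_le μ (hμ i0) fun i => by rw [abs_of_nonneg (hμ i)]; exact hi0 i
    · calc μ i0 = |μ i0| := (abs_of_nonneg (hμ i0)).symm
        _ ≤ ‖diagonal μ‖ := le_l2_opNorm_diagonal μ i0
        _ = ‖N‖ := hNd.symm
  rw [hdiff, l2_opNorm_unitary_conj hn V _ hV, ht]
  refine le_antisymm ?_ ?_
  · refine l2_opNorm_diagonal_le _ (div_nonneg (hμ i0) (hμ1 i0).le) fun i => ?_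
    rw [abs_of_nonneg (div_nonneg (hμ i) (hμ1 i).le), div_le_div_iff₀ (hμ1 i) (hμ1 i0)]
    nlinarith [hi0 i, hμ i, hμ i0]
  · have := le_l2_opNorm_diagonal (fun i => μ i / (1 + μ i)) i0
    rwa [abs_of_nonneg (div_nonneg (hμ i0) (hμ1 i0).le)] at this

lemma norm_mul_inv_sqrt {p m : ℕ} (hp : 0 < p) (E : Matrix (Fin m) (Fin p) ℝ)
    (hM : (1 + Eᵀ * E).PosSemidef) :
    ‖E * (hM.sqrt)⁻¹‖ = ‖E‖ / Real.sqrt (1 + ‖E‖ ^ 2) := by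
  have hct : ∀ {a b : ℕ} (A : Matrix (Fin a) (Fin b) ℝ), Aᴴ = Aᵀ := fun A =>
    Matrix.conjTranspose_eq_transpose_of_trivial A
  have hEE : (Eᵀ * E).PosSemidef := by
    have := Matrix.posSemidef_conjTranspose_mul_self E
    rwa [hct] at this
  have hMpd : (1 + Eᵀ * E).PosDef := Matrix.PosDef.one.add_posSemidef hEE
  set R := hM.sqrt with hRdef
  have hRR : R * R = 1 + Eᵀ * E := hM.sqrt_mul_self
  have hRpsd : R.PosSemidef := hM.posSemidef_sqrt
  have hdet : IsUnit R.det := by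
    have h1 : R.det * R.det = (1 + Eᵀ * E).det := by rw [← Matrix.det_mul, hRR]
    have h2 : (0:ℝ) < (1 + Eᵀ * E).det := hMpd.det_pos
    have : R.det ≠ 0 := fun h => by rw [h, mul_zero] at h1; linarith
    exact isUnit_iff_ne_zero.mpr this
  have hRt : Rᵀ = R := by rw [← hct]; exact hRpsd.1
  have hSt : (R⁻¹)ᵀ = R⁻¹ := by rw [Matrix.transpose_nonsing_inv, hRt]
  have hSR : R⁻¹ * R = 1 := Matrix.nonsing_inv_mul R hdet
  have hRS : R * R⁻¹ = 1 := Matrix.mul_nonsing_inv R hdet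
  have key : (E * R⁻¹)ᵀ * (E * R⁻¹) = 1 - (1 + Eᵀ * E)⁻¹ := by
    rw [Matrix.transpose_mul, hSt]
    have hEEeq : Eᵀ * E = R * R - 1 := by rw [hRR, add_sub_cancel_left]
    calc R⁻¹ * Eᵀ * (E * R⁻¹) = R⁻¹ * (Eᵀ * E) * R⁻¹ := by
          simp only [Matrix.mul_assoc]
      _ = R⁻¹ * (R * R - 1) * R⁻¹ := by rw [hEEeq]
      _ = (R⁻¹ * R) * (R * R⁻¹) - R⁻¹ * R⁻¹ := by noncomm_ring
      _ = 1 - (R * R)⁻¹ := by rw [hSR, hRS, Matrix.mul_inv_rev, mul_one]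
      _ = 1 - (1 + Eᵀ * E)⁻¹ := by rw [hRR]
  have hnorm2 : ‖E * R⁻¹‖ * ‖E * R⁻¹‖ = ‖E‖ ^ 2 / (1 + ‖E‖ ^ 2) := by
    rw [← Matrix.l2_opNorm_conjTranspose_mul_self, hct, key, psd_norm_resolvent hp _ hEE,
      ← hct, Matrix.l2_opNorm_conjTranspose_mul_self, ← sq]
  have h1e : (0:ℝ) < 1 + ‖E‖ ^ 2 := by positivity
  have : ‖E * R⁻¹‖ = Real.sqrt (‖E‖ ^ 2 / (1 + ‖E‖ ^ 2)) := by
    rw [← hnorm2, ← sq, Real.sqrt_sq (norm_nonneg _)]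
  rw [this, Real.sqrt_div (sq_nonneg ‖E‖), Real.sqrt_sq (norm_nonneg _)]

lemma submatrix_form {p m a b : ℕ} (H X : Matrix (Fin (p+m)) (Fin (p+m)) ℝ)
    (f : Fin a → Fin (p+m)) (g : Fin b → Fin (p+m)) :
    (X.submatrix id f)ᵀ * H * X.submatrix id g = (Xᵀ * H * X).submatrix f g := by
  ext i j
  simp [Matrix.mul_apply, Finset.sum_mul, Matrix.submatrix, Matrix.transpose_apply]

lemma one_submatrix_zero {p m : ℕ} :
    (1 : Matrix (Fin (p+m)) (Fin (p+m)) ℝ).submatrix (Fin.natAdd p) (Fin.castAdd m) = 0 := by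
  ext i j
  have : (Fin.natAdd p i : Fin (p+m)) ≠ Fin.castAdd m j := by
    intro h
    have := congrArg Fin.val h
    simp [Fin.natAdd, Fin.castAdd] at this
    omega
  simp [Matrix.one_apply_ne this]

lemma one_submatrix_one {p m : ℕ} :
    (1 : Matrix (Fin (p+m)) (Fin (p+m)) ℝ).submatrix (Fin.natAdd p) (Fin.natAdd p) = 1 := by
  ext i j
  rcases eq_or_ne i j with rfl | hij
  · simp
  · have : (Fin.natAdd p i : Fin (p+m)) ≠ Fin.natAdd p j := by
      intro h
      have := congrArg Fin.val h
      simp [Fin.natAdd] at this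
      exact hij (Fin.ext this)
    simp [Matrix.one_apply_ne this, Matrix.one_apply_ne hij]

lemma diagonal_inv_eq {n : ℕ} (w : Fin n → ℝ) (hw : ∀ i, w i ≠ 0) :
    (Matrix.diagonal w)⁻¹ = Matrix.diagonal (fun i => (w i)⁻¹) := by
  apply Matrix.inv_eq_right_inv
  rw [Matrix.diagonal_mul_diagonal]
  have : (fun i => w i * (w i)⁻¹) = fun _ : Fin n => (1:ℝ) := by
    funext i; exact mul_inv_cancel₀ (hw i)
  rw [this, Matrix.diagonal_one]

/-- The main subspace-convergence bound of the CJ-FEAST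
GSVDsolver. With `Xᵀ H X = I`, `X = [X_p, X_⊥]` (first `p` and last `m`
columns of an `(p+m)×(p+m)` matrix), eigenvalues `g` decreasing and
nonnegative with gap `g_p > g_{p+1}`, `E⁰ = X_⊥ᵀ H X⁰ (X_pᵀ H X⁰)⁻¹`,
`E^{(k)} = (Γ'_p)^k E⁰ Γ_p^{−k}` and `M^{(k)} = I + (E^{(k)})ᵀ E^{(k)}`:
`‖X_⊥ᵀ H (X_p + X_⊥ E^{(k)}) (M^{(k)})^{−1/2}‖
  = ‖E^{(k)}‖/√(1 + ‖E^{(k)}‖²) ≤ (g_{p+1}/g_p)^k ‖E⁰‖`. -/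
theorem subspace_iteration_distance_bound {p m : ℕ} (hp : 0 < p) (hm : 0 < m)
    (H X : Matrix (Fin (p + m)) (Fin (p + m)) ℝ)
    (hH : Hᵀ = H) (hX : IsUnit X) (hXHX : Xᵀ * H * X = 1)
    (g : Fin (p + m) → ℝ) (hmono : Antitone g) (hnonneg : ∀ i, 0 ≤ g i)
    (hgap : g (Fin.natAdd p ⟨0, hm⟩) < g (Fin.castAdd m ⟨p - 1, by omega⟩))
    (Xp : Matrix (Fin (p + m)) (Fin p) ℝ) (hXp : Xp = X.submatrix id (Fin.castAdd m))
    (Xperp : Matrix (Fin (p + m)) (Fin m) ℝ) (hXperp : Xperp = X.submatrix id (Fin.natAdd p))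
    (X0 : Matrix (Fin (p + m)) (Fin p) ℝ) (hinv : IsUnit (Xpᵀ * H * X0))
    (E0 : Matrix (Fin m) (Fin p) ℝ) (hE0 : E0 = Xperpᵀ * H * X0 * (Xpᵀ * H * X0)⁻¹)
    (k : ℕ) (Ek : Matrix (Fin m) (Fin p) ℝ)
    (hEk : Ek = (Matrix.diagonal fun i : Fin m => g (Fin.natAdd p i)) ^ k * E0 *
      ((Matrix.diagonal fun i : Fin p => g (Fin.castAdd m i))⁻¹) ^ k)
    (hMk : (1 + Ekᵀ * Ek).PosSemidef) :
    specNorm (Xperpᵀ * H * ((Xp + Xperp * Ek) * (hMk.sqrt)⁻¹)) =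
      specNorm Ek / Real.sqrt (1 + specNorm Ek ^ 2) ∧
    specNorm Ek / Real.sqrt (1 + specNorm Ek ^ 2) ≤
      (g (Fin.natAdd p ⟨0, hm⟩) / g (Fin.castAdd m ⟨p - 1, by omega⟩)) ^ k * specNorm E0 := by
  set a := g (Fin.natAdd p ⟨0, hm⟩) with hadef
  set b := g (Fin.castAdd m ⟨p - 1, by omega⟩) with hbdef
  have ha0 : 0 ≤ a := hnonneg _
  have hb0 : 0 < b := lt_of_le_of_lt ha0 hgap
  have hzero : Xperpᵀ * H * Xp = 0 := by
    rw [hXperp, hXp, submatrix_form, hXHX, one_submatrix_zero]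
  have hone : Xperpᵀ * H * Xperp = 1 := by
    rw [hXperp, submatrix_form, hXHX, one_submatrix_one]
  have hred : Xperpᵀ * H * ((Xp + Xperp * Ek) * (hMk.sqrt)⁻¹) = Ek * (hMk.sqrt)⁻¹ := by
    calc Xperpᵀ * H * ((Xp + Xperp * Ek) * (hMk.sqrt)⁻¹)
        = (Xperpᵀ * H * (Xp + Xperp * Ek)) * (hMk.sqrt)⁻¹ := by rw [← Matrix.mul_assoc]
      _ = (Xperpᵀ * H * Xp + Xperpᵀ * H * (Xperp * Ek)) * (hMk.sqrt)⁻¹ := by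
          rw [Matrix.mul_add]
      _ = (0 + (Xperpᵀ * H * Xperp) * Ek) * (hMk.sqrt)⁻¹ := by
          rw [hzero, ← Matrix.mul_assoc]
      _ = Ek * (hMk.sqrt)⁻¹ := by rw [hone, Matrix.one_mul, zero_add]
  constructor
  · rw [specNorm_eq, specNorm_eq, hred]
    exact norm_mul_inv_sqrt hp Ek hMk
  · have hb1 : specNorm Ek / Real.sqrt (1 + specNorm Ek ^ 2) ≤ specNorm Ek := by
      apply div_le_self (by rw [specNorm_eq]; exact norm_nonneg _)
      have h1 : (1:ℝ) ≤ 1 + specNorm Ek ^ 2 := by nlinarith [sq_nonneg (specNorm Ek)]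
      calc (1:ℝ) = Real.sqrt 1 := Real.sqrt_one.symm
        _ ≤ Real.sqrt (1 + specNorm Ek ^ 2) := Real.sqrt_le_sqrt h1
    refine hb1.trans ?_
    rw [specNorm_eq, specNorm_eq, hEk]
    have hgb : ∀ i : Fin p, b ≤ g (Fin.castAdd m i) := fun i => by
      apply hmono
      rw [Fin.le_def]
      simp only [Fin.castAdd, Fin.castLE]
      omega
    have hga : ∀ i : Fin m, g (Fin.natAdd p i) ≤ a := fun i => by
      apply hmono
      rw [Fin.le_def]
      simp only [Fin.natAdd]
      omega
    have hwne : ∀ i : Fin p, g (Fin.castAdd m i) ≠ 0 := fun i =>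
      (lt_of_lt_of_le hb0 (hgb i)).ne'
    rw [diagonal_inv_eq _ hwne, Matrix.diagonal_pow, Matrix.diagonal_pow]
    have h1 : ‖Matrix.diagonal ((fun i : Fin m => g (Fin.natAdd p i)) ^ k)‖ ≤ a ^ k := by
      refine l2_opNorm_diagonal_le _ (pow_nonneg ha0 k) fun i => ?_
      rw [Pi.pow_apply, abs_pow, abs_of_nonneg (hnonneg _)]
      exact pow_le_pow_left₀ (hnonneg _) (hga i) k
    have h2 : ‖Matrix.diagonal ((fun i : Fin p => (g (Fin.castAdd m i))⁻¹) ^ k)‖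
        ≤ (b⁻¹) ^ k := by
      refine l2_opNorm_diagonal_le _ (pow_nonneg (inv_nonneg.mpr hb0.le) k) fun i => ?_
      rw [Pi.pow_apply, abs_pow, abs_of_nonneg (inv_nonneg.mpr (hnonneg _))]
      refine pow_le_pow_left₀ (inv_nonneg.mpr (hnonneg _)) ?_ k
      exact inv_anti₀ hb0 (hgb i)
    calc ‖Matrix.diagonal ((fun i : Fin m => g (Fin.natAdd p i)) ^ k) * E0 *
          Matrix.diagonal ((fun i : Fin p => (g (Fin.castAdd m i))⁻¹) ^ k)‖
        ≤ ‖Matrix.diagonal ((fun i : Fin m => g (Fin.natAdd p i)) ^ k) * E0‖ *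
          ‖Matrix.diagonal ((fun i : Fin p => (g (Fin.castAdd m i))⁻¹) ^ k)‖ :=
          Matrix.l2_opNorm_mul _ _
      _ ≤ (‖Matrix.diagonal ((fun i : Fin m => g (Fin.natAdd p i)) ^ k)‖ * ‖E0‖) *
          ‖Matrix.diagonal ((fun i : Fin p => (g (Fin.castAdd m i))⁻¹) ^ k)‖ := by
          exact mul_le_mul_of_nonneg_right (Matrix.l2_opNorm_mul _ _) (norm_nonneg _)
      _ ≤ (a ^ k * ‖E0‖) * (b⁻¹) ^ k := by
          have hn1 : (0:ℝ) ≤ ‖Matrix.diagonal ((fun i : Fin m => g (Fin.natAdd p i)) ^ k)‖ :=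
            norm_nonneg _
          have := mul_le_mul (mul_le_mul_of_nonneg_right h1 (norm_nonneg E0)) h2
            (norm_nonneg _) (by positivity)
          exact this
      _ = (a / b) ^ k * ‖E0‖ := by rw [div_pow, div_eq_mul_inv, ← inv_pow]; ring
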